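/- Let V : H^d → H be a row partial isometry and T ⊇ V a row contractive extension. For every z in the open unit ball of ℂ^d, the operator (I - Tz*)^{-1} exists (since ‖Tz*‖ < 1) and maps H ⊖ ran(V) bijectively onto H ⊖ ran((V - z) V*V), where z is viewed as the row operator z : H^d → H, z(h₁,...,h_d) = z₁h₁ + ... + z_d h_d. -/

import Mathlib

/-!
Since `V V*` is a projection, `V` is a partial isometry: `V V* V = V`, so `‖V* V x‖ = ‖V x‖`.
As `T` extends `V`, it maps `V* V x` to `V x` without loss of norm, and a contraction that
preserves the norm of `y` satisfies `T* T y = y`; hence `T* V = V* V`, i.e. `V* T = V* V`.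
This gives `V* (1 - T z*) = ((V - z) V* V)*`, so the Neumann-series invertible `1 - T z*`
(`‖T z*‖ ≤ ‖z‖ < 1`) maps `ker ((V - z) V* V)* = Ran_z(V)ᗮ` onto `ker V* = (ran V)ᗮ`.
-/

open ContinuousLinearMap

set_option synthInstance.maxHeartbeats 1000000
set_option maxHeartbeats 1000000

noncomputable section

instance piLpComplete {d : ℕ} {H : Type*} [NormedAddCommGroup H]
    [InnerProductSpace ℂ H] [CompleteSpace H] :
    CompleteSpace (PiLp 2 fun _ : Fin d => H) :=
  inferInstance

/-- The row operator `z : H^d → H`, `(h₁,...,h_d) ↦ Σ zⱼ hⱼ`, for a scalar row `z ∈ ℂ^d`. -/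
def rowOp {d : ℕ} {H : Type*} [NormedAddCommGroup H] [InnerProductSpace ℂ H]
    (z : EuclideanSpace ℂ (Fin d)) : PiLp 2 (fun _ : Fin d => H) →L[ℂ] H :=
  ∑ j, z j • ((ContinuousLinearMap.proj j : (∀ _ : Fin d, H) →L[ℂ] H).comp
    (PiLp.continuousLinearEquiv 2 ℂ (fun _ : Fin d => H)).toContinuousLinearMap)

/-- The column operator `z* : H → H^d`, `h ↦ (z̄₁ h, ..., z̄_d h)`; the adjoint of `rowOp z`. -/
def colOp {d : ℕ} {H : Type*} [NormedAddCommGroup H] [InnerProductSpace ℂ H]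
    (z : EuclideanSpace ℂ (Fin d)) : H →L[ℂ] PiLp 2 (fun _ : Fin d => H) :=
  ((PiLp.continuousLinearEquiv 2 ℂ (fun _ : Fin d => H)).symm.toContinuousLinearMap).comp
    (ContinuousLinearMap.pi fun j => (starRingEnd ℂ (z j)) • ContinuousLinearMap.id ℂ H)

/-- Ampliation `A ⊗ I_d` of an operator `A : H → J` acting componentwise on columns. -/
def liftD {d : ℕ} {H J : Type*} [NormedAddCommGroup H] [InnerProductSpace ℂ H]
    [NormedAddCommGroup J] [InnerProductSpace ℂ J] (A : H →L[ℂ] J) :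
    PiLp 2 (fun _ : Fin d => H) →L[ℂ] PiLp 2 (fun _ : Fin d => J) :=
  ((PiLp.continuousLinearEquiv 2 ℂ (fun _ : Fin d => J)).symm.toContinuousLinearMap).comp <|
    (ContinuousLinearMap.pi fun j =>
      A.comp ((ContinuousLinearMap.proj j : (∀ _ : Fin d, H) →L[ℂ] H))).comp
    (PiLp.continuousLinearEquiv 2 ℂ (fun _ : Fin d => H)).toContinuousLinearMap

section Adjoint

variable {𝕜 E F : Type*} [RCLike 𝕜]
  [NormedAddCommGroup E] [InnerProductSpace 𝕜 E] [CompleteSpace E]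
  [NormedAddCommGroup F] [InnerProductSpace 𝕜 F] [CompleteSpace F]

theorem comp_adjoint_comp_self_of_isIdempotentElem {V : E →L[𝕜] F}
    (hV : IsIdempotentElem (V ∘L adjoint V)) : V ∘L (adjoint V ∘L V) = V := by
  have hP (y : F) : V (adjoint V (V (adjoint V y))) = V (adjoint V y) := congr($hV y)
  rw [← sub_eq_zero, ← adjoint_comp_self_eq_zero_iff, ← adjoint_comp_self_eq_zero_iff]
  ext y
  simp [hP]

theorem adjoint_apply_apply_eq_of_norm_apply_eq {T : E →L[𝕜] F} (hT : ‖T‖ ≤ 1) {y : E}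
    (hy : ‖T y‖ = ‖y‖) : adjoint T (T y) = y := by
  have h_re : RCLike.re (inner 𝕜 (adjoint T (T y)) y) = ‖y‖ ^ 2 := by
    rw [adjoint_inner_left, inner_self_eq_norm_sq, hy]
  have h_norm : ‖adjoint T (T y)‖ ≤ ‖y‖ :=
    calc ‖adjoint T (T y)‖ ≤ ‖adjoint T‖ * ‖T y‖ := le_opNorm _ _
      _ ≤ 1 * ‖y‖ := by rw [LinearIsometryEquiv.norm_map, hy]; gcongr
      _ = ‖y‖ := one_mul _
  have h_sq : ‖adjoint T (T y) - y‖ ^ 2 ≤ 0 := by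
    rw [norm_sub_sq (𝕜 := 𝕜), h_re]
    nlinarith [norm_nonneg (adjoint T (T y))]
  rw [← sub_eq_zero, ← norm_eq_zero]
  exact (pow_eq_zero_iff two_ne_zero).mp (h_sq.antisymm (sq_nonneg _))

theorem norm_adjoint_apply_apply_of_comp_adjoint_comp_self {V : E →L[𝕜] F}
    (hV : V ∘L (adjoint V ∘L V) = V) (x : E) : ‖adjoint V (V x)‖ = ‖V x‖ := by
  have hVx : V (adjoint V (V x)) = V x := congr($hV x)
  rw [← pow_left_inj₀ (norm_nonneg _) (norm_nonneg _) two_ne_zero,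
    apply_norm_sq_eq_inner_adjoint_right, comp_apply, adjoint_adjoint, hVx,
    ← inner_self_eq_norm_sq (𝕜 := 𝕜)]

theorem adjoint_comp_eq_adjoint_comp_self_of_comp_eq {V T : E →L[𝕜] F} (hT : ‖T‖ ≤ 1)
    (hV : V ∘L (adjoint V ∘L V) = V) (hext : T ∘L (adjoint V ∘L V) = V) :
    adjoint V ∘L T = adjoint V ∘L V := by
  suffices adjoint T ∘L V = adjoint V ∘L V by
    simpa [adjoint_comp] using congr(adjoint $this)
  ext x
  have hTx : T (adjoint V (V x)) = V x := congr($hext x)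
  have hnorm : ‖T (adjoint V (V x))‖ = ‖adjoint V (V x)‖ := by
    rw [hTx, norm_adjoint_apply_apply_of_comp_adjoint_comp_self hV]
  simpa [hTx] using adjoint_apply_apply_eq_of_norm_apply_eq hT hnorm

theorem adjoint_comp_one_sub_comp_adjoint {V T R : E →L[𝕜] F} (hV : V ∘L (adjoint V ∘L V) = V)
    (hVT : adjoint V ∘L T = adjoint V ∘L V) :
    adjoint V ∘L (1 - T ∘L adjoint R) = adjoint ((V - R) ∘L (adjoint V ∘L V)) := by
  have hVV : (adjoint V ∘L V) ∘L adjoint V = adjoint V := by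
    simpa [adjoint_comp] using congr(adjoint $hV)
  rw [adjoint_comp, adjoint_comp, adjoint_adjoint, map_sub, comp_sub, comp_sub, hVV,
    ← comp_assoc, hVT, one_def, comp_id]

theorem bijOn_orthogonal_range_of_adjoint_comp_eq (u : (F →L[𝕜] F)ˣ) (B : E →L[𝕜] F)
    (C : E →L[𝕜] F) (h : adjoint B ∘L (u : F →L[𝕜] F) = adjoint C) :
    Set.BijOn ↑u⁻¹ ((LinearMap.range (B : E →ₗ[𝕜] F))ᗮ : Set F)
      ((LinearMap.range (C : E →ₗ[𝕜] F))ᗮ : Set F) := by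
  have hu (x : F) : (u : F →L[𝕜] F) ((↑u⁻¹ : F →L[𝕜] F) x) = x := congr($u.mul_inv x)
  have hu' (x : F) : (↑u⁻¹ : F →L[𝕜] F) ((u : F →L[𝕜] F) x) = x := congr($u.inv_mul x)
  simp only [orthogonal_range, ← h]
  refine Set.InvOn.bijOn (f' := (u : F →L[𝕜] F)) ⟨fun x _ ↦ hu x, fun x _ ↦ hu' x⟩
    (fun x hx ↦ ?_) (fun x hx ↦ ?_)
  · simpa [hu] using hx
  · simpa using hx

end Adjoint

section RowOperators

variable {d : ℕ} {H : Type*} [NormedAddCommGroup H] [InnerProductSpace ℂ H]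

theorem adjoint_rowOp [CompleteSpace H] (z : EuclideanSpace ℂ (Fin d)) :
    adjoint (rowOp z : PiLp 2 (fun _ : Fin d => H) →L[ℂ] H) = colOp z := by
  refine ((eq_adjoint_iff _ _).mpr fun x y ↦ ?_).symm
  simp [rowOp, colOp, PiLp.inner_apply, inner_smul_left, inner_sum, inner_smul_right]

theorem norm_colOp_le (z : EuclideanSpace ℂ (Fin d)) :
    ‖(colOp z : H →L[ℂ] PiLp 2 fun _ : Fin d => H)‖ ≤ ‖z‖ := by
  refine opNorm_le_bound _ (norm_nonneg z) fun h ↦ ?_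
  have h_sq : ‖colOp z h‖ ^ 2 = (‖z‖ * ‖h‖) ^ 2 := by
    simp [PiLp.norm_sq_eq_of_L2, colOp, norm_smul, mul_pow, Finset.sum_mul]
  exact (pow_left_inj₀ (norm_nonneg _) (by positivity) two_ne_zero).mp h_sq |>.le

end RowOperators

theorem stmt_4 {d : ℕ} {H : Type*} [NormedAddCommGroup H] [InnerProductSpace ℂ H]
    [CompleteSpace H]
    (V T : PiLp 2 (fun _ : Fin d => H) →L[ℂ] H)
    (hV : IsIdempotentElem (V ∘L (adjoint V))) (hT : ‖T‖ ≤ 1)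
    (hext : T ∘L ((adjoint V) ∘L V) = V)
    (z : EuclideanSpace ℂ (Fin d)) (hz : ‖z‖ < 1) :
    ∃ S : H →L[ℂ] H,
      (1 - T ∘L colOp z) ∘L S = 1 ∧ S ∘L (1 - T ∘L colOp z) = 1 ∧
      Set.BijOn S ((LinearMap.range (V : PiLp 2 (fun _ : Fin d => H) →ₗ[ℂ] H))ᗮ : Set H)
        (((LinearMap.range ((V - rowOp z) ∘L ((adjoint V) ∘L V) : PiLp 2 (fun _ : Fin d => H) →ₗ[ℂ] H))ᗮ : Set H)) := by
  have hVV := comp_adjoint_comp_self_of_isIdempotentElem hV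
  have hA : ‖T ∘L colOp z‖ < 1 :=
    calc ‖T ∘L colOp z‖ ≤ ‖T‖ * ‖colOp z‖ := opNorm_comp_le _ _
      _ ≤ 1 * ‖z‖ := by gcongr; exact norm_colOp_le z
      _ < 1 := by rwa [one_mul]
  let u := Units.oneSub _ hA
  refine ⟨↑u⁻¹, u.mul_inv, u.inv_mul, bijOn_orthogonal_range_of_adjoint_comp_eq u V _ ?_⟩
  rw [Units.val_oneSub, ← adjoint_rowOp]
  exact adjoint_comp_one_sub_comp_adjoint hVV
    (adjoint_comp_eq_adjoint_comp_self_of_comp_eq hT hVV hext)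

end
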